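/- Suppose for each data point (x,y) the truncated Hessian quadratic form satisfies W^T [∇²ℓ(f_W(x),y)]⁺ W ≤ H for all W in the hypothesis class, where H > 0 is a constant. Then with Σ chosen as in equation (choice Σ ∝ (H_W)^{-1/2} W W^T with scaling sqrt(C/(2(1−β)² n ‖W‖²))), the two terms C·W^TΣ^{-1}W/(4β(1−β)n) and ((1−β)/(2β))⟨Σ, H_W⟩ are each bounded above by (1/β)·sqrt(C·H/(2n)). -/

import Mathlib

open Matrix
open scoped Matrix

/-!
Write `Σ = a Wᵀ` with `a = c · H_W^{-1/2} W`. For any `Σ⁺` satisfying the first and third Penrose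
identities, `Σ Σ⁺` is the orthogonal projection onto `span a`, which forces `Wᵀ Σ⁺ = aᵀ / ‖a‖²`;
hence `Wᵀ Σ⁺ W = ⟨a, W⟩ / ‖a‖²`. Likewise `⟨Σ, H_W⟩ = c · Wᵀ H_W^{1/2} W`. With `s = √(C / 2n)`
the scaling reads `c = s / ((1 - β) ‖W‖)`, and both terms become `s / (2β)` times a quantity that
Cauchy–Schwarz, together with `‖H_W^{1/2} W‖² = Wᵀ H_W W ≤ H`, bounds by `√H`.
-/

namespace Matrix

variable {ι : Type*} [Fintype ι]

theorem dotProduct_le_sqrt_mul_sqrt (x y : ι → ℝ) :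
    x ⬝ᵥ y ≤ √(x ⬝ᵥ x) * √(y ⬝ᵥ y) := by
  simpa only [dotProduct, sq] using Real.sum_mul_le_sqrt_mul_sqrt Finset.univ x y

section OrderedRing

variable {R : Type*} [Ring R] [LinearOrder R] [IsStrictOrderedRing R]

theorem dotProduct_self_nonneg (v : ι → R) : 0 ≤ v ⬝ᵥ v :=
  Finset.sum_nonneg fun i _ ↦ mul_self_nonneg (v i)

theorem dotProduct_self_pos {v : ι → R} (hv : v ≠ 0) : 0 < v ⬝ᵥ v :=
  (dotProduct_self_nonneg v).lt_of_ne' (dotProduct_self_eq_zero.not.2 hv)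

end OrderedRing

theorem trace_transpose_vecMulVec_mul {α : Type*} [CommSemiring α] (a b : ι → α)
    (M : Matrix ι ι α) : ((vecMulVec a b)ᵀ * M).trace = a ⬝ᵥ (M *ᵥ b) := by
  rw [transpose_vecMulVec, vecMulVec_mul, trace_vecMulVec, dotProduct_comm, ← dotProduct_mulVec]

/-- `a (bᵀ S)` is symmetric and fixes `a`, so it is the orthogonal projection `a aᵀ / (aᵀ a)`. -/
theorem vecMul_eq_of_penrose_vecMulVec {K : Type*} [Field K] {a b : ι → K} {S : Matrix ι ι K}
    (ha : a ⬝ᵥ a ≠ 0) (hb : b ≠ 0)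
    (h₁ : vecMulVec a b * S * vecMulVec a b = vecMulVec a b)
    (h₃ : (vecMulVec a b * S)ᵀ = vecMulVec a b * S) :
    b ᵥ* S = (a ⬝ᵥ a)⁻¹ • a := by
  have ha₀ : a ≠ 0 := by rintro rfl; simp at ha
  rw [vecMulVec_mul] at h₁ h₃
  generalize b ᵥ* S = v at h₁ h₃ ⊢
  have hva : v ⬝ᵥ a = 1 := by
    rw [vecMulVec_mul_vecMulVec, vecMulVec_smul] at h₁
    exact smul_left_injective K (vecMulVec_ne_zero ha₀ hb) (h₁.trans (one_smul K _).symm)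
  have hv : (a ⬝ᵥ a) • v = a := by
    simpa [transpose_vecMulVec, vecMulVec_mulVec, hva] using congrArg (· *ᵥ a) h₃
  exact (eq_inv_smul_iff₀ ha).2 hv

theorem dotProduct_mulVec_eq_of_penrose_vecMulVec {K : Type*} [Field K] {a b : ι → K}
    {S : Matrix ι ι K} (ha : a ⬝ᵥ a ≠ 0) (hb : b ≠ 0)
    (h₁ : vecMulVec a b * S * vecMulVec a b = vecMulVec a b)
    (h₃ : (vecMulVec a b * S)ᵀ = vecMulVec a b * S) :
    b ⬝ᵥ (S *ᵥ b) = (a ⬝ᵥ b) / (a ⬝ᵥ a) := by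
  rw [dotProduct_mulVec, vecMul_eq_of_penrose_vecMulVec ha hb h₁ h₃, smul_dotProduct, smul_eq_mul,
    inv_mul_eq_div]

namespace IsSymm

variable {A : Matrix ι ι ℝ}

theorem dotProduct_mulVec_comm (hA : A.IsSymm) (x y : ι → ℝ) :
    x ⬝ᵥ (A *ᵥ y) = (A *ᵥ x) ⬝ᵥ y := by
  rw [dotProduct_mulVec, ← mulVec_transpose, hA.eq]

theorem dotProduct_mul_self_mulVec (hA : A.IsSymm) (x : ι → ℝ) :
    x ⬝ᵥ ((A * A) *ᵥ x) = (A *ᵥ x) ⬝ᵥ (A *ᵥ x) := by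
  rw [← mulVec_mulVec, hA.dotProduct_mulVec_comm]

theorem dotProduct_mulVec_le (hA : A.IsSymm) (x : ι → ℝ) :
    x ⬝ᵥ (A *ᵥ x) ≤ √(x ⬝ᵥ x) * √(x ⬝ᵥ ((A * A) *ᵥ x)) := by
  rw [hA.dotProduct_mul_self_mulVec]
  exact dotProduct_le_sqrt_mul_sqrt x (A *ᵥ x)

theorem dotProduct_mul_sqrt_le {u x : ι → ℝ} (hA : A.IsSymm) (hAu : A *ᵥ u = x) :
    (u ⬝ᵥ x) * √(x ⬝ᵥ x) ≤ √(x ⬝ᵥ ((A * A) *ᵥ x)) * (u ⬝ᵥ u) := by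
  have hxx : x ⬝ᵥ x = (A *ᵥ x) ⬝ᵥ u := by
    nth_rewrite 2 [← hAu]
    exact hA.dotProduct_mulVec_comm x u
  rw [hA.dotProduct_mul_self_mulVec]
  calc (u ⬝ᵥ x) * √(x ⬝ᵥ x) ≤ √(u ⬝ᵥ u) * √(x ⬝ᵥ x) * √(x ⬝ᵥ x) := by
        gcongr; exact dotProduct_le_sqrt_mul_sqrt u x
    _ = √(u ⬝ᵥ u) * ((A *ᵥ x) ⬝ᵥ u) := by
        rw [mul_assoc, Real.mul_self_sqrt (dotProduct_self_nonneg x), hxx]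
    _ ≤ √(u ⬝ᵥ u) * (√((A *ᵥ x) ⬝ᵥ (A *ᵥ x)) * √(u ⬝ᵥ u)) := by
        gcongr; exact dotProduct_le_sqrt_mul_sqrt _ u
    _ = √((A *ᵥ x) ⬝ᵥ (A *ᵥ x)) * (u ⬝ᵥ u) := by
        rw [mul_left_comm, Real.mul_self_sqrt (dotProduct_self_nonneg u)]

theorem mul_sqrt_mul_dotProduct_mulVec_le_of_penrose {S : Matrix ι ι ℝ} {u x : ι → ℝ} {c : ℝ}
    (hA : A.IsSymm) (hAu : A *ᵥ u = x) (hx : x ≠ 0) (hc : c ≠ 0)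
    (h₁ : vecMulVec (c • u) x * S * vecMulVec (c • u) x = vecMulVec (c • u) x)
    (h₃ : (vecMulVec (c • u) x * S)ᵀ = vecMulVec (c • u) x * S) :
    c * √(x ⬝ᵥ x) * (x ⬝ᵥ (S *ᵥ x)) ≤ √(x ⬝ᵥ ((A * A) *ᵥ x)) := by
  have hu : u ≠ 0 := by
    rintro rfl
    exact hx (by rw [← hAu, mulVec_zero])
  have hcu := dotProduct_self_pos (smul_ne_zero hc hu)
  have huu := dotProduct_self_pos hu
  rw [dotProduct_mulVec_eq_of_penrose_vecMulVec hcu.ne' hx h₁ h₃]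
  simp only [smul_dotProduct, dotProduct_smul, smul_eq_mul]
  rw [show c * √(x ⬝ᵥ x) * (c * (u ⬝ᵥ x) / (c * (c * (u ⬝ᵥ u)))) =
      (u ⬝ᵥ x) * √(x ⬝ᵥ x) / (u ⬝ᵥ u) by field_simp, div_le_iff₀ huu]
  exact hA.dotProduct_mul_sqrt_le hAu

end IsSymm

end Matrix

section Balancing

variable {C β : ℝ} {n : ℕ}

theorem sqrt_balancing_scale_mul (hβ : β < 1) {q : ℝ} (hq : 0 < q) :
    √(C / (2 * (1 - β) ^ 2 * n * q)) * √q * (1 - β) = √(C / (2 * n)) := by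
  have hβ' : 0 < 1 - β := by linarith
  have hx : 0 < (1 - β) * √q := mul_pos hβ' (Real.sqrt_pos.2 hq)
  rw [show C / (2 * (1 - β) ^ 2 * n * q) = C / (2 * n) / ((1 - β) * √q) ^ 2 by
      rw [mul_pow, Real.sq_sqrt hq.le, div_div]; congr 1; ring,
    Real.sqrt_div' _ (sq_nonneg _), Real.sqrt_sq hx.le]
  field_simp [hβ'.ne']

theorem sqrt_div_two_mul_le_balanced_bound (hC : 0 ≤ C) (hβ : 0 < β) {H t : ℝ} (ht : t ≤ √H) :
    √(C / (2 * n)) / (2 * β) * t ≤ 1 / β * √(C * H / (2 * n)) := by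
  rw [mul_div_right_comm, Real.sqrt_mul (by positivity) H]
  calc √(C / (2 * n)) / (2 * β) * t ≤ √(C / (2 * n)) / (2 * β) * √H := by gcongr
    _ = 1 / β * (√(C / (2 * n)) * √H) / 2 := by ring
    _ ≤ 1 / β * (√(C / (2 * n)) * √H) := half_le_self (by positivity)

theorem balanced_quadratic_term_le (hC : 0 < C) (hβ0 : 0 < β) (hβ1 : β < 1) (hn : 0 < n) {q c X H : ℝ}
    (hq : 0 < q) (hc : c = √(C / (2 * (1 - β) ^ 2 * n * q))) (hX : c * √q * X ≤ √H) :
    C * X / (4 * β * (1 - β) * n) ≤ 1 / β * √(C * H / (2 * n)) := by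
  have hs := sqrt_balancing_scale_mul (C := C) (n := n) hβ1 hq
  rw [← hc] at hs
  have hC' : C = 2 * n * (c * √q * (1 - β)) ^ 2 := by
    rw [hs, Real.sq_sqrt (by positivity)]
    field_simp
  have hβ' : (1 : ℝ) - β ≠ 0 := by linarith
  refine le_of_eq_of_le ?_ (sqrt_div_two_mul_le_balanced_bound hC.le hβ0 hX)
  rw [← hs, hC']
  field_simp
  ring

theorem balanced_trace_term_le (hC : 0 ≤ C) (hβ0 : 0 < β) (hβ1 : β < 1) {q c Y H : ℝ}
    (hq : 0 < q) (hc : c = √(C / (2 * (1 - β) ^ 2 * n * q))) (hY : Y ≤ √q * √H) :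
    (1 - β) / (2 * β) * (c * Y) ≤ 1 / β * √(C * H / (2 * n)) := by
  refine le_trans ?_ (sqrt_div_two_mul_le_balanced_bound hC hβ0 le_rfl)
  have hβ1' : 0 ≤ 1 - β := by linarith
  rw [← sqrt_balancing_scale_mul hβ1 hq, ← hc]
  calc (1 - β) / (2 * β) * (c * Y) ≤ (1 - β) / (2 * β) * (c * (√q * √H)) := by
        gcongr
        rw [hc]; positivity
    _ = c * √q * (1 - β) / (2 * β) * √H := by ring

end Balancing

theorem stmt19_balanced_terms_bound_general
    (pdim : ℕ) (HW R Rinv : Matrix (Fin pdim) (Fin pdim) ℝ) (W : Fin pdim → ℝ)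
    (hR : R.PosSemidef) (hRR : R * R = HW)
    (hRinv : R * Rinv = 1)
    (hW : W ≠ 0) (H C β : ℝ) (hC : 0 < C)
    (hβ : β ∈ Set.Ioo (0 : ℝ) 1) (n : ℕ) (hn : 1 ≤ n)
    (hquad : W ⬝ᵥ (HW *ᵥ W) ≤ H)
    (Sinv : Matrix (Fin pdim) (Fin pdim) ℝ)
    (c : ℝ) (hc : c = Real.sqrt (C / (2 * (1 - β) ^ 2 * n * (W ⬝ᵥ W))))
    (Sig : Matrix (Fin pdim) (Fin pdim) ℝ)
    (hSig : Sig = c • (Rinv * vecMulVec W W))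
    (hpinv1 : Sig * Sinv * Sig = Sig)
    (hpinv3 : (Sig * Sinv)ᵀ = Sig * Sinv) :
    C * (W ⬝ᵥ (Sinv *ᵥ W)) / (4 * β * (1 - β) * n) ≤
        (1 / β) * Real.sqrt (C * H / (2 * n)) ∧
      ((1 - β) / (2 * β)) * (Sigᵀ * HW).trace ≤
        (1 / β) * Real.sqrt (C * H / (2 * n)) := by
  obtain ⟨hβ0, hβ1⟩ := hβ
  have hn' : 0 < n := hn
  have hRsymm : R.IsSymm := by simpa using hR.1
  have hRu : R *ᵥ (Rinv *ᵥ W) = W := by rw [mulVec_mulVec, hRinv, one_mulVec]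
  have hq := dotProduct_self_pos hW
  have hc0 : c ≠ 0 := by
    rw [hc]
    exact (Real.sqrt_pos.2 (by positivity)).ne'
  have hRW : √(W ⬝ᵥ ((R * R) *ᵥ W)) ≤ √H := Real.sqrt_le_sqrt (hRR ▸ hquad)
  rw [hSig, mul_vecMulVec, ← smul_vecMulVec] at hpinv1 hpinv3 ⊢
  refine ⟨balanced_quadratic_term_le hC hβ0 hβ1 hn' hq hc ?_, ?_⟩
  · exact (hRsymm.mul_sqrt_mul_dotProduct_mulVec_le_of_penrose hRu hW hc0 hpinv1 hpinv3).trans hRW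
  · rw [← hRR, trace_transpose_vecMulVec_mul, smul_dotProduct, ← mulVec_mulVec,
      hRsymm.dotProduct_mulVec_comm, hRu, smul_eq_mul]
    exact balanced_trace_term_le hC.le hβ0 hβ1 hq hc ((hRsymm.dotProduct_mulVec_le W).trans (by gcongr))

/-- Let `H_W` be the expected truncated Hessian (symmetric positive
definite), with PSD square root `R = H_W^{1/2}` and inverse square root `Rinv = H_W^{-1/2}`.
Suppose the truncated Hessian quadratic form satisfies `Wᵀ H_W W ≤ H` for a constant
`H > 0`. Choose `Σ = c · H_W^{-1/2} W Wᵀ` with scaling `c = sqrt(C/(2(1−β)² n ‖W‖²))`,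
and let `Sinv` be a Moore–Penrose pseudo-inverse of `Σ`. Then the two terms
`C · Wᵀ Σ⁻¹ W / (4β(1−β)n)` and `((1−β)/(2β)) ⟨Σ, H_W⟩` are each bounded above by
`(1/β) · sqrt(C·H/(2n))`. -/
theorem stmt19_balanced_terms_bound
    (pdim : ℕ) (HW R Rinv : Matrix (Fin pdim) (Fin pdim) ℝ) (W : Fin pdim → ℝ)
    (hHW : HW.PosDef) (hR : R.PosSemidef) (hRR : R * R = HW)
    (hRinv : R * Rinv = 1) (hRinvSymm : Rinv.IsSymm)
    (hW : W ≠ 0) (H C β : ℝ) (hH : 0 < H) (hC : 0 < C)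
    (hβ : β ∈ Set.Ioo (0 : ℝ) 1) (n : ℕ) (hn : 1 ≤ n)
    (hquad : W ⬝ᵥ (HW *ᵥ W) ≤ H)
    (Sinv : Matrix (Fin pdim) (Fin pdim) ℝ)
    (c : ℝ) (hc : c = Real.sqrt (C / (2 * (1 - β) ^ 2 * n * (W ⬝ᵥ W))))
    (Sig : Matrix (Fin pdim) (Fin pdim) ℝ)
    (hSig : Sig = c • (Rinv * vecMulVec W W))
    (hpinv1 : Sig * Sinv * Sig = Sig) (hpinv2 : Sinv * Sig * Sinv = Sinv)
    (hpinv3 : (Sig * Sinv)ᵀ = Sig * Sinv) (hpinv4 : (Sinv * Sig)ᵀ = Sinv * Sig) :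
    C * (W ⬝ᵥ (Sinv *ᵥ W)) / (4 * β * (1 - β) * n) ≤
        (1 / β) * Real.sqrt (C * H / (2 * n)) ∧
      ((1 - β) / (2 * β)) * (Sigᵀ * HW).trace ≤
        (1 / β) * Real.sqrt (C * H / (2 * n)) :=
  stmt19_balanced_terms_bound_general pdim HW R Rinv W hR hRR hRinv hW H C β hC hβ n hn hquad Sinv c
    hc Sig hSig hpinv1 hpinv3
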